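/- Let a ∈ ℂ[X] be a polynomial of degree at most 4 with λ⁴·conj(a(1/conj(λ))) = a(λ) for all λ ≠ 0 and with λ^{−2}·a(λ) a positive real number for all λ with |λ| = 1. Then a(−1) is a positive real number, and there exists a unique monic polynomial â ∈ ℝ[X] of degree 4 such that â(κ) = ((i + κ)⁴ / a(−1)) · a((i − κ)/(i + κ)) for all κ ∈ ℂ with κ ≠ −i; moreover â(x) > 0 for every real x. -/

import Mathlib

/-!
Clearing denominators in `a((i - κ)/(i + κ))` gives the polynomial `(i + κ)⁴ a((i - κ)/(i + κ))`,
the degree-4 homogenization of `a` evaluated at `(i - κ, i + κ)`; its `κ⁴`-coefficient is `a(-1)`.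
For real `x` the point `λ = (i - x)/(i + x)` lies on the unit circle and `(i + x)⁴ λ² = (1 + x²)²`,
so the positivity of `λ⁻² a(λ)` makes this polynomial real and positive on `ℝ`. A complex
polynomial that is real on `ℝ` has real coefficients, so dividing by `a(-1) > 0` gives `â`, which is
unique because a real polynomial is determined by its values on `ℝ`.
-/

open Polynomial

namespace Polynomial

section CommSemiring

variable {R A : Type*} [CommSemiring R] [CommSemiring A] [Algebra R A]

theorem aeval_homogenize_eq_sum (p : R[X]) (n : ℕ) (g : Fin 2 → A) :
    MvPolynomial.aeval g (p.homogenize n) =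
      ∑ k ∈ Finset.range (n + 1), algebraMap R A (p.coeff k) * g 0 ^ k * g 1 ^ (n - k) := by
  simp only [homogenize, map_sum, Finset.Nat.sum_antidiagonal_eq_sum_range_succ_mk,
    MvPolynomial.aeval_monomial]
  refine Finset.sum_congr rfl fun k _ ↦ ?_
  rw [Finsupp.update_eq_add_single, Finsupp.prod_add_index', Finsupp.prod_single_index,
    Finsupp.prod_single_index]
  · ring
  all_goals simp [pow_add]

variable {p : R[X]} {n : ℕ} {g : Fin 2 → R[X]}

theorem natDegree_aeval_homogenize_le (hg : ∀ i, (g i).natDegree ≤ 1) :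
    (MvPolynomial.aeval g (p.homogenize n)).natDegree ≤ n := by
  rw [aeval_homogenize_eq_sum]
  refine natDegree_sum_le_of_forall_le _ _ fun k hk ↦ ?_
  have hkn : k + (n - k) = n := Nat.add_sub_of_le (Nat.lt_succ_iff.mp (Finset.mem_range.mp hk))
  calc _ ≤ (g 0 ^ k * g 1 ^ (n - k)).natDegree := by
        rw [mul_assoc]; exact natDegree_C_mul_le _ _
    _ ≤ k * 1 + (n - k) * 1 :=
        natDegree_mul_le_of_le (natDegree_pow_le_of_le _ (hg 0)) (natDegree_pow_le_of_le _ (hg 1))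
    _ = n := by omega

theorem coeff_aeval_homogenize (hg : ∀ i, (g i).natDegree ≤ 1) :
    (MvPolynomial.aeval g (p.homogenize n)).coeff n =
      MvPolynomial.eval (fun i ↦ (g i).coeff 1) (p.homogenize n) := by
  rw [aeval_homogenize_eq_sum, ← MvPolynomial.aeval_eq_eval, aeval_homogenize_eq_sum,
    finsetSum_coeff]
  refine Finset.sum_congr rfl fun k hk ↦ ?_
  have hkn : k + (n - k) = n := Nat.add_sub_of_le (Nat.lt_succ_iff.mp (Finset.mem_range.mp hk))
  have hdeg : ∀ i m, ((g i) ^ m).natDegree ≤ m := fun i m ↦ by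
    simpa using natDegree_pow_le_of_le m (hg i)
  have hpow : ∀ i m, ((g i) ^ m).coeff m = (g i).coeff 1 ^ m := fun i m ↦ by
    simpa using coeff_pow_of_natDegree_le (m := m) (hg i)
  have hmul := coeff_mul_add_eq_of_natDegree_le (hdeg 0 k) (hdeg 1 (n - k))
  rw [hkn, hpow, hpow] at hmul
  rw [mul_assoc, algebraMap_eq, coeff_C_mul, hmul, Algebra.algebraMap_self, RingHom.id_apply,
    mul_assoc]

end CommSemiring

theorem eval_aeval_homogenize {K : Type*} [Field K] {p : K[X]} {n : ℕ} (hn : p.natDegree ≤ n)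
    (g : Fin 2 → K[X]) {x : K} (hx : (g 1).eval x ≠ 0) :
    (MvPolynomial.aeval g (p.homogenize n)).eval x =
      p.eval ((g 0).eval x / (g 1).eval x) * (g 1).eval x ^ n := by
  rw [← coe_aeval_eq_eval, MvPolynomial.comp_aeval_apply, MvPolynomial.aeval_eq_eval,
    eval_homogenize hn _ hx]

theorem mem_lifts_ofReal_of_forall_eval_ofReal {p : ℂ[X]}
    (hp : ∀ x : ℝ, ∃ r : ℝ, p.eval (x : ℂ) = r) : p ∈ lifts (algebraMap ℝ ℂ) := by
  have hconj : p.map (starRingEnd ℂ) = p := by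
    refine eq_of_infinite_eval_eq _ _
      ((Set.infinite_range_of_injective Complex.ofReal_injective).mono ?_)
    rintro _ ⟨x, rfl⟩
    obtain ⟨r, hr⟩ := hp x
    show (p.map _).eval (x : ℂ) = p.eval (x : ℂ)
    rw [← Complex.conj_ofReal, eval_map_apply, Complex.conj_ofReal, hr, Complex.conj_ofReal]
  refine (lifts_iff_coeff_lifts p).mpr fun k ↦ ⟨(p.coeff k).re, ?_⟩
  have hk := congrArg (coeff · k) hconj
  rw [coeff_map] at hk
  exact Complex.conj_eq_iff_re.mp hk

end Polynomial

open Complex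

namespace Complex

theorem I_add_ofReal_ne_zero (x : ℝ) : I + x ≠ 0 := by
  intro h
  simpa using congrArg im h

theorem ofReal_ne_neg_I (x : ℝ) : (x : ℂ) ≠ -I := by
  intro h
  simpa using congrArg im h

theorem norm_I_sub_ofReal_div_I_add_ofReal (x : ℝ) : ‖(I - x) / (I + x)‖ = 1 := by
  have hconj : I - x = -(starRingEnd ℂ) (I + x) := by
    apply Complex.ext <;> simp
  rw [norm_div, hconj, norm_neg, Complex.norm_conj,
    div_self (norm_ne_zero_iff.mpr (I_add_ofReal_ne_zero x))]

theorem I_add_ofReal_pow_four_mul_sq (x : ℝ) :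
    (I + x) ^ 4 * ((I - x) / (I + x)) ^ 2 = ((1 + x ^ 2) ^ 2 : ℝ) := by
  have := I_add_ofReal_ne_zero x
  field_simp
  push_cast
  linear_combination (I ^ 2 - 1 - 2 * (x : ℂ) ^ 2) * I_sq

theorem aeval_ofReal (p : ℝ[X]) (x : ℝ) : aeval (x : ℂ) p = p.eval x :=
  Polynomial.aeval_ofReal p x

end Complex

variable {a : ℂ[X]}

noncomputable def cayleyNumerator (a : ℂ[X]) : ℂ[X] :=
  MvPolynomial.aeval ![C I - X, C I + X] (a.homogenize 4)

theorem natDegree_cayleyPair_le (i : Fin 2) : (![C I - X, C I + X] i).natDegree ≤ 1 := by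
  fin_cases i <;>
    simp only [Fin.zero_eta, Fin.mk_one, Matrix.cons_val_zero, Matrix.cons_val_one] <;>
    compute_degree

theorem natDegree_cayleyNumerator_le : (cayleyNumerator a).natDegree ≤ 4 :=
  natDegree_aeval_homogenize_le natDegree_cayleyPair_le

theorem coeff_cayleyNumerator_four (hdeg : a.natDegree ≤ 4) :
    (cayleyNumerator a).coeff 4 = a.eval (-1) := by
  rw [cayleyNumerator, coeff_aeval_homogenize natDegree_cayleyPair_le,
    eval_homogenize hdeg _ (by simp)]
  simp

theorem eval_cayleyNumerator (hdeg : a.natDegree ≤ 4) {κ : ℂ} (hκ : κ ≠ -I) :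
    (cayleyNumerator a).eval κ = (I + κ) ^ 4 * a.eval ((I - κ) / (I + κ)) := by
  have hκ' : I + κ ≠ 0 := fun h ↦ hκ (by linear_combination h)
  rw [cayleyNumerator, eval_aeval_homogenize hdeg _ (by simpa using hκ')]
  simp [mul_comm]

theorem exists_pos_cayleyNumerator_eval_ofReal (hdeg : a.natDegree ≤ 4)
    (hpos : ∀ l : ℂ, ‖l‖ = 1 → ∃ r : ℝ, 0 < r ∧ a.eval l = (r : ℂ) * l ^ 2) (x : ℝ) :
    ∃ s : ℝ, 0 < s ∧ (cayleyNumerator a).eval (x : ℂ) = s := by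
  obtain ⟨s, hs, hsa⟩ := hpos _ (norm_I_sub_ofReal_div_I_add_ofReal x)
  refine ⟨s * (1 + x ^ 2) ^ 2, by positivity, ?_⟩
  rw [eval_cayleyNumerator hdeg (ofReal_ne_neg_I x), hsa, mul_left_comm,
    I_add_ofReal_pow_four_mul_sq]
  push_cast
  ring

theorem exists_monic_aeval_eq_cayleyNumerator (hdeg : a.natDegree ≤ 4)
    (hpos : ∀ l : ℂ, ‖l‖ = 1 → ∃ r : ℝ, 0 < r ∧ a.eval l = (r : ℂ) * l ^ 2)
    {r : ℝ} (hr : r ≠ 0) (ha : a.eval (-1) = r) :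
    ∃ ahat : ℝ[X], ahat.Monic ∧ ahat.degree = 4 ∧
      ∀ κ : ℂ, aeval κ ahat = (cayleyNumerator a).eval κ / r := by
  set P := C ((r : ℂ)⁻¹) * cayleyNumerator a
  have hP_coeff : P.coeff 4 = 1 := by
    rw [coeff_C_mul, coeff_cayleyNumerator_four hdeg, ha, inv_mul_cancel₀ (by exact_mod_cast hr)]
  have hP_natDegree : P.natDegree = 4 :=
    natDegree_eq_of_le_of_coeff_ne_zero
      ((natDegree_C_mul_le _ _).trans natDegree_cayleyNumerator_le) (by simp [hP_coeff])
  have hP_monic : P.Monic := by rw [Monic, leadingCoeff, hP_natDegree, hP_coeff]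
  have hP_lifts : P ∈ lifts (algebraMap ℝ ℂ) := by
    refine mem_lifts_ofReal_of_forall_eval_ofReal fun x ↦ ?_
    obtain ⟨s, -, hs⟩ := exists_pos_cayleyNumerator_eval_ofReal hdeg hpos x
    exact ⟨r⁻¹ * s, by simp [P, hs]⟩
  obtain ⟨Q, hQ_map, hQ_natDegree, hQ_monic⟩ :=
    lifts_and_natDegree_eq_and_monic hP_lifts hP_monic
  refine ⟨Q, hQ_monic, (degree_eq_iff_natDegree_eq hQ_monic.ne_zero).mpr
    (hQ_natDegree.trans hP_natDegree), fun κ ↦ ?_⟩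
  rw [aeval_def, eval₂_eq_eval_map, hQ_map, eval_mul, eval_C, inv_mul_eq_div]

theorem eval_pos_of_forall_aeval_eq (hdeg : a.natDegree ≤ 4)
    (hpos : ∀ l : ℂ, ‖l‖ = 1 → ∃ r : ℝ, 0 < r ∧ a.eval l = (r : ℂ) * l ^ 2)
    {r : ℝ} (hr : 0 < r) (ha : a.eval (-1) = r) {ahat : ℝ[X]}
    (h : ∀ κ : ℂ, κ ≠ -I →
      aeval κ ahat = ((I + κ) ^ 4 / a.eval (-1)) * a.eval ((I - κ) / (I + κ)))
    (x : ℝ) : 0 < ahat.eval x := by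
  obtain ⟨s, hs, hsa⟩ := exists_pos_cayleyNumerator_eval_ofReal hdeg hpos x
  have : ((ahat.eval x : ℝ) : ℂ) = (s / r : ℝ) := by
    rw [← Complex.aeval_ofReal, h x (ofReal_ne_neg_I x), ha, div_mul_eq_mul_div,
      ← eval_cayleyNumerator hdeg (ofReal_ne_neg_I x), hsa, ofReal_div]
  rw [ofReal_inj.mp this]
  positivity

theorem stmt_16 (a : ℂ[X]) (hdeg : a.degree ≤ 4)
    (hpos : ∀ l : ℂ, ‖l‖ = 1 →
      ∃ r : ℝ, 0 < r ∧ a.eval l = (r : ℂ) * l ^ 2) :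
    (∃ r : ℝ, 0 < r ∧ a.eval (-1) = (r : ℂ)) ∧
    (∃! ahat : ℝ[X], ahat.Monic ∧ ahat.degree = 4 ∧
      ∀ κ : ℂ, κ ≠ -Complex.I →
        Polynomial.aeval κ ahat =
          ((Complex.I + κ) ^ 4 / a.eval (-1)) *
            a.eval ((Complex.I - κ) / (Complex.I + κ))) ∧
    (∀ ahat : ℝ[X], ahat.Monic → ahat.degree = 4 →
      (∀ κ : ℂ, κ ≠ -Complex.I →
        Polynomial.aeval κ ahat =
          ((Complex.I + κ) ^ 4 / a.eval (-1)) *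
            a.eval ((Complex.I - κ) / (Complex.I + κ))) →
      ∀ x : ℝ, 0 < ahat.eval x) := by
  have hdeg' : a.natDegree ≤ 4 := natDegree_le_iff_degree_le.mpr hdeg
  obtain ⟨r, hr, ha⟩ : ∃ r : ℝ, 0 < r ∧ a.eval (-1) = r := by
    obtain ⟨r, hr, h⟩ := hpos (-1) (by simp)
    exact ⟨r, hr, by simpa using h⟩
  obtain ⟨Q, hQ_monic, hQ_degree, hQ⟩ :=
    exists_monic_aeval_eq_cayleyNumerator hdeg' hpos hr.ne' ha
  have hQ' : ∀ κ : ℂ, κ ≠ -I →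
      aeval κ Q = ((I + κ) ^ 4 / a.eval (-1)) * a.eval ((I - κ) / (I + κ)) :=
    fun κ hκ ↦ by rw [hQ, eval_cayleyNumerator hdeg' hκ, ha, div_mul_eq_mul_div]
  refine ⟨⟨r, hr, ha⟩, ⟨Q, ⟨hQ_monic, hQ_degree, hQ'⟩, fun p ⟨_, _, hp⟩ ↦ ?_⟩,
    fun p _ _ hp ↦ eval_pos_of_forall_aeval_eq hdeg' hpos hr ha hp⟩
  refine Polynomial.funext fun x ↦ ofReal_injective ?_
  rw [← Complex.aeval_ofReal, ← Complex.aeval_ofReal, hp x (ofReal_ne_neg_I x),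
    hQ' x (ofReal_ne_neg_I x)]
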